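/- arXiv:2308.16292 — 2 statements merged into one kernel-verified Lean document; each statement's English description precedes it below -/
import Mathlib

section
/- For each nonempty permutation word α and each natural number k with k ≥ |α| − 1, the nondeterministic automatic complexity satisfies A_N(α^k) = |α|. -/
/-- `wpow u m` is the `m`-fold concatenation of the word `u` with itself. -/
def wpow {α : Type*} (u : List α) (m : ℕ) : List α := (List.replicate m u).flatten

/-- A nondeterministic finite automaton with `q` states over alphabet `α`. -/
structure MyNFA (α : Type*) (q : ℕ) where
  step : Fin q → α → Fin q → Prop
  start : Fin q
  accept : Fin q → Prop

/-- `p` (restricted to indices `≤ w.length`) is an accepting walk of `M` reading `w`. -/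
def IsAccWalk {α : Type*} {q : ℕ} (M : MyNFA α q) (w : List α) (p : ℕ → Fin q) : Prop :=
  p 0 = M.start ∧ M.accept (p w.length) ∧
    ∀ i (h : i < w.length), M.step (p i) (w.get ⟨i, h⟩) (p (i + 1))

/-- Some NFA with `q` states accepts `w`, and among all words of length `|w|`
there is exactly one accepting walk (which reads `w`). -/
def UniqueWitness {α : Type*} (q : ℕ) (w : List α) : Prop :=
  ∃ M : MyNFA α q, ∃ p, IsAccWalk M w p ∧
    ∀ v p', List.length v = w.length → IsAccWalk M v p' →
      v = w ∧ ∀ i ≤ w.length, p' i = p i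

/-- Unique-acceptance nondeterministic automatic complexity `A_N = A_Nu`. -/
noncomputable def AN {α : Type*} (w : List α) : ℕ := sInf {q | UniqueWitness q w}

/-- Some NFA with `q` states accepts `w` and accepts no other word of length `|w|`. -/
def ExactWitness {α : Type*} (q : ℕ) (w : List α) : Prop :=
  ∃ M : MyNFA α q, (∃ p, IsAccWalk M w p) ∧
    ∀ v, List.length v = w.length → (∃ p', IsAccWalk M v p') → v = w

/-- Exact-acceptance nondeterministic automatic complexity `A_Ne`. -/
noncomputable def ANe {α : Type*} (w : List α) : ℕ := sInf {q | ExactWitness q w}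

/-- Witness for the conditional automatic complexity `A_N(x ∣ y)`:
an NFA over the product alphabet such that exactly one accepting walk of
length `|y|` reads a word whose first projection is `y`, and the second
projection of that word is `x`. -/
def CondWitness {A B : Type*} (q : ℕ) (x : List A) (y : List B) : Prop :=
  ∃ M : MyNFA (B × A) q, ∃ w : List (B × A), ∃ p, IsAccWalk M w p ∧
    w.map Prod.fst = y ∧ w.map Prod.snd = x ∧
    ∀ w' p', List.length w' = y.length → IsAccWalk M w' p' →
      w'.map Prod.fst = y → (w' = w ∧ ∀ i ≤ y.length, p' i = p i)

/-- Conditional nondeterministic automatic complexity `A_N(x ∣ y)`. -/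
noncomputable def CondAN {A B : Type*} (x : List A) (y : List B) : ℕ :=
  sInf {q | CondWitness q x y}

/-- `w` contains an `m`-th power: some nonempty `u` with `u^m` a factor of `w`. -/
def ContainsPow {α : Type*} (w : List α) (m : ℕ) : Prop :=
  ∃ u : List α, u ≠ [] ∧ (wpow u m) <:+: w

/-- A word is primitive if it is nonempty and not a proper power. -/
def Primitive {α : Type*} (w : List α) : Prop :=
  w ≠ [] ∧ ∀ (u : List α) (k : ℕ), 2 ≤ k → w ≠ wpow u k

lemma wpow_succ {α : Type*} (u : List α) (m : ℕ) : wpow u (m+1) = u ++ wpow u m := by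
  simp [wpow, List.replicate_succ]

lemma wpow_length {α : Type*} (u : List α) (m : ℕ) : (wpow u m).length = m * u.length := by
  induction m with
  | zero => simp [wpow]
  | succ m ih => rw [wpow_succ]; simp [ih]; ring

lemma wpow_getElem {α : Type*} (u : List α) (hu : 0 < u.length) (m i : ℕ)
    (hi : i < (wpow u m).length) :
    (wpow u m)[i] = u[i % u.length]'(Nat.mod_lt _ hu) := by
  induction m generalizing i with
  | zero => simp [wpow] at hi
  | succ m ih =>
    have hi' : i < (u ++ wpow u m).length := by rw [← wpow_succ]; exact hi
    rw [List.getElem_of_eq (wpow_succ u m) hi]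
    rcases lt_or_ge i u.length with h | h
    · rw [List.getElem_append_left h]
      congr 1
      exact (Nat.mod_eq_of_lt h).symm
    · rw [List.getElem_append_right h, ih]
      congr 1
      exact (Nat.mod_eq_sub_mod h).symm

lemma swap_walk {Γ : Type*} {q : ℕ} (M : MyNFA Γ q) (w : List Γ) (p : ℕ → Fin q)
    (hp : IsAccWalk M w p) {a b c : ℕ} (hab : a < b) (hbc : b < c) (hcL : c ≤ w.length)
    (h1 : p a = p b) (h2 : p b = p c) :
    ∃ v : List Γ, ∃ p' : ℕ → Fin q, v.length = w.length ∧ IsAccWalk M v p' ∧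
      ∀ (hav : a < v.length) (hbw : b < w.length), v[a] = w[b] := by
  set L := w.length with hL
  set σ : ℕ → ℕ := fun i =>
    if i < a then i else if i < a + (c - b) then i + (b - a) else if i < c then i - (c - b) else i
    with hσ
  have hσlt : ∀ i, i < L → σ i < L := by intro i hi; simp only [hσ]; split_ifs <;> omega
  have hσL : σ L = L := by simp only [hσ]; split_ifs <;> omega
  have hσa : σ a = b := by simp only [hσ]; split_ifs <;> omega
  have hpσ0 : p (σ 0) = p 0 := by
    rcases Nat.eq_zero_or_pos a with ha | ha
    · have : σ 0 = b := by simp only [hσ]; split_ifs <;> omega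
      rw [this, ← h1, ha]
    · have : σ 0 = 0 := by simp only [hσ]; split_ifs <;> omega
      rw [this]
  have hsucc : ∀ i, p (σ (i+1)) = p (σ i + 1) := by
    intro i
    have hcase : σ (i+1) = σ i + 1 ∨ (σ (i+1) = b ∧ σ i + 1 = a) ∨
        (σ (i+1) = a ∧ σ i + 1 = c) ∨ (σ (i+1) = c ∧ σ i + 1 = b) := by
      simp only [hσ]; split_ifs <;> omega
    rcases hcase with h | ⟨e1,e2⟩ | ⟨e1,e2⟩ | ⟨e1,e2⟩
    · rw [h]
    · rw [e1, e2]; exact h1.symm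
    · rw [e1, e2]; rw [h1, h2]
    · rw [e1, e2]; exact h2.symm
  refine ⟨List.ofFn (fun i : Fin L => w[σ i]'(hσlt i i.2)), fun i => p (σ i), by simpa using hL, ⟨?_, ?_, ?_⟩, ?_⟩
  · show p (σ 0) = M.start
    rw [hpσ0]; exact hp.1
  · have hlen : (List.ofFn (fun i : Fin L => w[σ i]'(hσlt i i.2))).length = L := by simp
    show M.accept (p (σ _))
    rw [hlen, hσL]; exact hp.2.1
  · intro i hi
    have hi' : i < L := by simpa using hi
    have hst := hp.2.2 (σ i) (hσlt i hi')
    show M.step (p (σ i)) _ (p (σ (i+1)))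
    rw [hsucc i]
    have hget : (List.ofFn (fun j : Fin L => w[σ j]'(hσlt j j.2))).get ⟨i, hi⟩
        = w[σ i]'(hσlt i hi') := by
      simp [List.get_eq_getElem, List.getElem_ofFn]
    rw [hget]
    simpa [List.get_eq_getElem] using hst
  · intro hav hbw
    have hav' : a < L := by simpa using hav
    rw [List.getElem_ofFn]
    simp only [hσa]

lemma upper_witness {Γ : Type*} (α : List Γ) (hn : 0 < α.length) (k : ℕ) :
    UniqueWitness α.length (wpow α k) := by
  set n := α.length with hndef
  set w := wpow α k with hwdef
  have hwlen : w.length = n * k := by rw [hwdef, wpow_length]; ring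
  have hwget : ∀ (i : ℕ) (hi : i < w.length), w[i] = α[i % n]'(Nat.mod_lt _ hn) :=
    fun i hi => wpow_getElem α hn k i hi
  have hmodsucc : ∀ i : ℕ, (i + 1) % n = (i % n + 1) % n :=
    fun i => ((Nat.mod_modEq i n).symm.add_right 1)
  refine ⟨⟨fun s x t => x = α[(s:ℕ)]'s.2 ∧ (t:ℕ) = ((s:ℕ)+1) % n, ⟨0, hn⟩, fun t => t = ⟨0, hn⟩⟩,
    fun i => ⟨i % n, Nat.mod_lt _ hn⟩, ⟨?_, ?_, ?_⟩, ?_⟩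
  · ext; simp
  · show (⟨w.length % n, _⟩ : Fin n) = ⟨0, hn⟩
    ext; simp [hwlen, Nat.mul_mod_right]
  · intro i hi
    refine ⟨?_, ?_⟩
    · rw [List.get_eq_getElem, hwget i hi]
    · exact (hmodsucc i).symm ▸ (hmodsucc i)
  · intro v p' hlen hacc
    have key : ∀ i, i ≤ w.length → p' i = ⟨i % n, Nat.mod_lt _ hn⟩ := by
      intro i
      induction i with
      | zero => intro _; rw [hacc.1]; ext; simp
      | succ i ih =>
        intro hi
        have hi' : i < v.length := by omega
        have hst := hacc.2.2 i hi'
        have hpi := ih (by omega)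
        have h2 := hst.2
        rw [hpi] at h2
        ext
        rw [h2]
        exact (hmodsucc i).symm
    have hveq : v = w := by
      apply List.ext_getElem hlen
      intro i h1 h2
      have hst := hacc.2.2 i h1
      have h1' := hst.1
      rw [List.get_eq_getElem] at h1'
      rw [h1', key i (by omega)]
      exact (hwget i h2).symm
    exact ⟨hveq, fun i hi => key i hi⟩

theorem stmt8 {Γ : Type*} (α : List Γ) (h : α.Nodup) (hne : α ≠ []) (k : ℕ)
    (hk : α.length - 1 ≤ k) : AN (wpow α k) = α.length := by
  set n := α.length with hndef
  have hn : 0 < n := List.length_pos_iff.2 hne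
  set w := wpow α k with hwdef
  have hwlen : w.length = n * k := by rw [hwdef, wpow_length]; ring
  have hwget : ∀ (i : ℕ) (hi : i < w.length), w[i] = α[i % n]'(Nat.mod_lt _ hn) :=
    fun i hi => wpow_getElem α hn k i hi
  have hmem : UniqueWitness n w := upper_witness α hn k
  have hlb : ∀ q, UniqueWitness q w → n ≤ q := by
    intro q hq
    by_contra hqn
    push_neg at hqn
    obtain ⟨M, p, hwalk, hU⟩ := hq
    rcases Nat.eq_zero_or_pos q with h0 | h0
    · subst h0; exact absurd M.start.isLt (Nat.not_lt_zero _)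
    have hk1 : 1 ≤ k := by omega
    set L := w.length with hLdef
    -- pigeonhole
    have hmaps : ∀ x ∈ (Finset.univ : Finset (Fin (L+1))),
        p (x : ℕ) ∈ (Finset.univ : Finset (Fin q)) := fun _ _ => Finset.mem_univ _
    have hcardlt : (Finset.univ : Finset (Fin q)).card * (k+1)
        < (Finset.univ : Finset (Fin (L+1))).card := by
      simp only [Finset.card_univ, Fintype.card_fin]
      have e2 : n * k = (n-1) * k + k := by
        have e1 : (n-1) + 1 = n := Nat.succ_pred_eq_of_pos hn
        calc n * k = ((n-1)+1) * k := by rw [e1]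
        _ = (n-1)*k + k := by ring
      have e3 : q * k ≤ (n-1) * k := Nat.mul_le_mul_right _ (by omega)
      have e4 : q * (k+1) = q * k + q := by ring
      omega
    obtain ⟨s0, -, hfib⟩ :=
      Finset.exists_lt_card_fiber_of_mul_lt_card_of_maps_to hmaps hcardlt
    obtain ⟨t, htmono, htprop⟩ : ∃ t : ℕ → ℕ,
        (∀ i j, j ≤ k+1 → i < j → t i < t j) ∧ (∀ j ≤ k+1, t j ≤ L ∧ p (t j) = s0) := by
      have hTcard : k + 2 ≤ (Finset.filter (fun x : Fin (L+1) => p (x : ℕ) = s0) Finset.univ).card := hfib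
      have hps : ∀ j : Fin (k+2),
          p (((Finset.orderEmbOfCardLe _ hTcard) j : Fin (L+1)) : ℕ) = s0 := fun j =>
        (Finset.mem_filter.1 (Finset.orderEmbOfCardLe_mem _ hTcard j)).2
      refine ⟨fun j => if hj : j ≤ k+1 then
          (((Finset.orderEmbOfCardLe _ hTcard) ⟨j, by omega⟩ : Fin (L+1)) : ℕ) else 0, ?_, ?_⟩
      · intro i j hj hij
        dsimp only
        rw [dif_pos (by omega : i ≤ k+1), dif_pos hj]
        exact_mod_cast (Finset.orderEmbOfCardLe _ hTcard).strictMono (Fin.mk_lt_mk.2 hij)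
      · intro j hj
        dsimp only
        rw [dif_pos hj]
        exact ⟨Nat.lt_succ_iff.1 ((Finset.orderEmbOfCardLe _ hTcard) ⟨j, by omega⟩).isLt, hps _⟩
    -- divisibility for middle indices
    have hdvd : ∀ j, 0 < j → j ≤ k → n ∣ t j - t 0 := by
      intro j hj1 hj2
      have hab : t 0 < t j := htmono 0 j (by omega) hj1
      have hbc : t j < t (k+1) := htmono j (k+1) (by omega) (by omega)
      have hcL : t (k+1) ≤ L := (htprop (k+1) (le_refl _)).1
      have h1 : p (t 0) = p (t j) := by
        rw [(htprop 0 (by omega)).2, (htprop j (by omega)).2]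
      have h2 : p (t j) = p (t (k+1)) := by
        rw [(htprop j (by omega)).2, (htprop (k+1) (le_refl _)).2]
      obtain ⟨v, p', hvlen, hvwalk, hvget⟩ := swap_walk M w p hwalk hab hbc hcL h1 h2
      have hveq : v = w := (hU v p' hvlen hvwalk).1
      have haL : t 0 < L := by omega
      have hbL : t j < L := by omega
      have hwa : w[t 0]'(haL) = w[t j]'(hbL) := by
        have hv := hvget (by omega) hbL
        exact (List.getElem_of_eq hveq.symm haL).trans hv
      rw [hwget _ haL, hwget _ hbL] at hwa
      have hmod : t 0 % n = t j % n := h.getElem_inj_iff.1 hwa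
      exact (Nat.modEq_iff_dvd' hab.le).1 hmod
    -- growth
    have hge : ∀ j, j ≤ k → j * n ≤ t j - t 0 := by
      intro j
      induction j with
      | zero => intro _; simp
      | succ j ih =>
        intro hj
        have hih := ih (by omega)
        have hlt : t j < t (j+1) := htmono j (j+1) (by omega) (by omega)
        have hd1 : n ∣ t (j+1) - t 0 := hdvd (j+1) (by omega) hj
        have hd0 : n ∣ t j - t 0 := by
          rcases Nat.eq_zero_or_pos j with h0' | h0'
          · subst h0'; simp
          · exact hdvd j h0' (by omega)
        have h01 : t 0 ≤ t j := by
          rcases Nat.eq_zero_or_pos j with h0' | h0'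
          · subst h0'; exact le_refl _
          · exact (htmono 0 j (by omega) h0').le
        have hdiff : n ∣ (t (j+1) - t 0) - (t j - t 0) := Nat.dvd_sub hd1 hd0
        have hpos : 0 < (t (j+1) - t 0) - (t j - t 0) := by omega
        have hstep := Nat.le_of_dvd hpos hdiff
        have hmul : (j+1) * n = j*n + n := by ring
        omega
    have hfin : k * n ≤ t k - t 0 := hge k (le_refl k)
    have hlast : t k < t (k+1) := htmono k (k+1) (le_refl _) (by omega)
    have hlastle : t (k+1) ≤ L := (htprop (k+1) (le_refl _)).1
    have hLval : L = n * k := hwlen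
    have hcomm : n * k = k * n := Nat.mul_comm n k
    omega
  apply le_antisymm
  · exact Nat.sInf_le hmem
  · exact le_csInf ⟨n, hmem⟩ (fun q hq => hlb q hq)
end

section
/- For all words x and y of the same length, A_N(x # y) ≤ A_N(x | y) · A_N(y). -/
section Aux

lemma eq_zip_of_proj {α β : Type*} {l : List (α × β)} {a : List α} {b : List β}
    (ha : l.map Prod.fst = a) (hb : l.map Prod.snd = b) : l = a.zip b := by
  subst ha hb
  apply List.ext_getElem
  · simp
  · intro i h1 h2
    simp [List.getElem_zip]

/-- The path automaton with `w.length + 1` states. -/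
def pathNFA {α : Type*} (w : List α) : MyNFA α (w.length + 1) where
  step s a t := ∃ hs : (s : ℕ) < w.length, a = w.get ⟨s, hs⟩ ∧ (t : ℕ) = (s : ℕ) + 1
  start := ⟨0, Nat.succ_pos _⟩
  accept s := (s : ℕ) = w.length

lemma path_uniqueWitness {α : Type*} (w : List α) : UniqueWitness (w.length + 1) w := by
  refine ⟨pathNFA w, fun i => ⟨min i w.length, Nat.lt_succ_of_le (min_le_right _ _)⟩, ?_, ?_⟩
  · refine ⟨by simp [pathNFA], by simp [pathNFA], ?_⟩
    intro i hi
    refine ⟨by simp [Nat.min_eq_left hi.le]; omega, ?_, ?_⟩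
    · congr 1
      exact Fin.ext (by simp [Nat.min_eq_left hi.le])
    · simp [Nat.min_eq_left hi.le, Nat.min_eq_left (Nat.succ_le_of_lt hi)]
  · intro v p' hlen hw
    obtain ⟨h0, hacc, hstep⟩ := hw
    have key : ∀ i, i ≤ w.length → (p' i : ℕ) = i := by
      intro i
      induction i with
      | zero => intro _; simp [h0, pathNFA]
      | succ j ih =>
        intro hj
        have hjw : j < w.length := hj
        obtain ⟨hs, -, ht⟩ := hstep j (by omega)
        rw [ht, ih (le_of_lt hjw)]
    constructor
    · apply List.ext_getElem hlen
      intro i h1 h2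
      obtain ⟨hs, ha, -⟩ := hstep i (by omega)
      have hki := key i (by omega)
      simp only [List.get_eq_getElem, hki] at ha
      exact ha
    · intro i hi
      exact Fin.ext (by simp [key i hi, Nat.min_eq_left hi])

/-- Product automaton. -/
def prodNFA {Γ Δ : Type*} {q₁ q₂ : ℕ} (M₁ : MyNFA (Δ × Γ) q₁) (M₂ : MyNFA Δ q₂) :
    MyNFA (Γ × Δ) (q₁ * q₂) where
  step s c t := M₁.step (finProdFinEquiv.symm s).1 (c.2, c.1) (finProdFinEquiv.symm t).1 ∧
    M₂.step (finProdFinEquiv.symm s).2 c.2 (finProdFinEquiv.symm t).2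
  start := finProdFinEquiv (M₁.start, M₂.start)
  accept s := M₁.accept (finProdFinEquiv.symm s).1 ∧ M₂.accept (finProdFinEquiv.symm s).2

lemma prod_witness {Γ Δ : Type*} {q₁ q₂ : ℕ} {x : List Γ} {y : List Δ}
    (h : x.length = y.length) (h₁ : CondWitness q₁ x y) (h₂ : UniqueWitness q₂ y) :
    UniqueWitness (q₁ * q₂) (x.zip y) := by
  obtain ⟨M₁, w₁, p₁, hw₁, hf, hs, hu₁⟩ := h₁
  obtain ⟨M₂, p₂, hw₂, hu₂⟩ := h₂
  have hw₁len : w₁.length = y.length := by rw [← hf, List.length_map]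
  have hzl : (x.zip y).length = y.length := by rw [List.length_zip, h, min_self]
  have hw₁eq : w₁ = y.zip x := eq_zip_of_proj hf hs
  refine ⟨prodNFA M₁ M₂, fun i => finProdFinEquiv (p₁ i, p₂ i), ?_, ?_⟩
  · obtain ⟨h10, h1a, h1s⟩ := hw₁
    obtain ⟨h20, h2a, h2s⟩ := hw₂
    refine ⟨?_, ?_, ?_⟩
    · show finProdFinEquiv (p₁ 0, p₂ 0) = finProdFinEquiv (M₁.start, M₂.start)
      rw [h10, h20]
    · show M₁.accept _ ∧ M₂.accept _
      rw [hzl]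
      constructor
      · simpa [hw₁len] using h1a
      · simpa using h2a
    · intro i hi
      have hiy : i < y.length := by rwa [hzl] at hi
      have hix : i < x.length := by omega
      constructor
      · have := h1s i (by omega)
        simp only [Equiv.symm_apply_apply]
        convert this using 2 <;>
          simp [List.get_eq_getElem, List.getElem_zip, hw₁eq]
      · have := h2s i hiy
        simp only [Equiv.symm_apply_apply]
        convert this using 2 <;>
          simp [List.get_eq_getElem, List.getElem_zip]
  · intro v p' hlen hw
    obtain ⟨h0, hacc, hstep⟩ := hw
    set e := (finProdFinEquiv : Fin q₁ × Fin q₂ ≃ Fin (q₁ * q₂))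
    have hvy : v.length = y.length := by rw [hlen, hzl]
    -- second-coordinate walk in M₂
    have hwalk₂ : IsAccWalk M₂ (v.map Prod.snd) (fun i => (e.symm (p' i)).2) := by
      refine ⟨?_, ?_, ?_⟩
      · show (e.symm (p' 0)).2 = M₂.start
        rw [h0]; simp [prodNFA, e]
      · have := hacc.2
        simpa [List.length_map, hlen, hzl, e] using this
      · intro i hi
        have hi' : i < v.length := by simpa using hi
        have := (hstep i hi').2
        simpa [List.get_eq_getElem, e] using this
    obtain ⟨hvsnd, hp2⟩ := hu₂ _ _ (by simp [hvy]) hwalk₂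
    -- first-coordinate walk in M₁ reading v.map Prod.swap
    have hwalk₁ : IsAccWalk M₁ (v.map Prod.swap) (fun i => (e.symm (p' i)).1) := by
      refine ⟨?_, ?_, ?_⟩
      · show (e.symm (p' 0)).1 = M₁.start
        rw [h0]; simp [prodNFA, e]
      · have := hacc.1
        simpa [List.length_map, hlen, hzl, hw₁len, e] using this
      · intro i hi
        have hi' : i < v.length := by simpa using hi
        have := (hstep i hi').1
        simpa [List.get_eq_getElem, Prod.swap, e] using this
    have hswfst : (v.map Prod.swap).map Prod.fst = y := by
      rw [List.map_map]
      convert hvsnd using 2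
      rfl
    obtain ⟨hveq, hp1⟩ := hu₁ _ _ (by simp [hvy]) hwalk₁ hswfst
    have hvfst : v.map Prod.fst = x := by
      have : (v.map Prod.swap).map Prod.snd = x := by rw [hveq, hs]
      rw [List.map_map] at this
      convert this using 2
      rfl
    constructor
    · exact eq_zip_of_proj hvfst hvsnd
    · intro i hi
      have hi' : i ≤ y.length := by rwa [hzl] at hi
      have e1 : (e.symm (p' i)).1 = p₁ i := hp1 i hi'
      have e2 : (e.symm (p' i)).2 = p₂ i := hp2 i hi'
      have : e.symm (p' i) = (p₁ i, p₂ i) := Prod.ext e1 e2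
      calc p' i = e (e.symm (p' i)) := (e.apply_symm_apply _).symm
        _ = e (p₁ i, p₂ i) := by rw [this]

end Aux

theorem stmt10 {Γ Δ : Type*} (x : List Γ) (y : List Δ) (h : x.length = y.length) :
    AN (x.zip y) ≤ CondAN x y * AN y := by
  have hc : CondWitness (CondAN x y) x y := by
    have hne : {q | CondWitness q x y}.Nonempty := by
      refine ⟨(y.zip x).length + 1, ?_⟩
      obtain ⟨M, p, hwalk, huniq⟩ := path_uniqueWitness (y.zip x)
      refine ⟨M, y.zip x, p, hwalk, List.map_fst_zip (by omega),
        List.map_snd_zip (by omega), ?_⟩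
      intro w' p' hlen hw' _
      have := huniq w' p' (by rw [hlen, List.length_zip, h, min_self]) hw'
      refine ⟨this.1, fun i hi => this.2 i ?_⟩
      rw [List.length_zip, h, min_self]; exact hi
    exact Nat.sInf_mem hne
  have hy : UniqueWitness (AN y) y := by
    have hne : {q | UniqueWitness q y}.Nonempty := ⟨y.length + 1, path_uniqueWitness y⟩
    exact Nat.sInf_mem hne
  exact Nat.sInf_le (prod_witness h hc hy)
end
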